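/- Suppose f : ℝ^d → ℝ is twice continuously differentiable with γ-Lipschitz Hessian. Fix μ ∈ ℝ^d, α > 0, and a symmetric positive definite d×d matrix Σ with τ·I ⪯ Σ^{-1} ⪯ ζ·I where 0 < τ ≤ ζ. If u₁,…,u_b ∈ ℝ^d satisfy ‖uᵢ‖² ≤ c for every i, for some c > 0, then ‖Ḡ(Σ) − (1/(2b))·Σ_{i=1}^b uᵢᵀΣ^{1/2}∇²f(μ)Σ^{1/2}uᵢ·(Σ^{-1/2}uᵢuᵢᵀΣ^{-1/2} − Σ^{-1})‖₂ ≤ c^{3/2}·(c + 1)·ζγα/(4τ^{3/2}), where ‖·‖₂ is the operator norm. -/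

import Mathlib

/-!
Write `Q = Σ^{1/2}` and `vᵢ = Q uᵢ`. Since `uᵢᵀ Q ∇²f(μ) Q uᵢ = vᵢᵀ ∇²f(μ) vᵢ`, the difference is
`(2bα²)⁻¹ ∑ᵢ εᵢ (Q⁻¹ uᵢ uᵢᵀ Q⁻¹ - Q⁻¹ Q⁻¹)`, where `εᵢ` is the error of the second-order model of the
central difference `f(μ - αvᵢ) + f(μ + αvᵢ) - 2f(μ)`. A `γ`-Lipschitz Hessian gives
`|εᵢ| ≤ γ/3 · α³‖vᵢ‖³`. From `τ I ⪯ Q⁻¹Q⁻¹ ⪯ ζ I` we get `τ‖vᵢ‖² ≤ ‖Q⁻¹ vᵢ‖² = ‖uᵢ‖² ≤ c` and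
`‖Q⁻¹‖² ≤ ζ`, so every weight matrix has norm at most `ζ(c + 1)`, and the triangle inequality over
the `b` samples gives the bound (even with `1/6` in place of `1/4`).
-/

open MeasureTheory ProbabilityTheory Matrix
open scoped BigOperators RealInnerProductSpace

noncomputable section

abbrev Vec (d : ℕ) := EuclideanSpace ℝ (Fin d)
abbrev Mat (d : ℕ) := Matrix (Fin d) (Fin d) ℝ

/-- View a Euclidean vector as a plain function. -/
def toPi {d : ℕ} (u : Vec d) : Fin d → ℝ := u
/-- View a plain function as a Euclidean vector. -/
def ofPi {d : ℕ} (u : Fin d → ℝ) : Vec d := WithLp.toLp 2 u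

/-- Matrix-vector multiplication on Euclidean space. -/
def mvec {d : ℕ} (A : Mat d) (u : Vec d) : Vec d := ofPi (A.mulVec (toPi u))

/-- The standard Gaussian measure N(0, I_d) on ℝ^d. -/
def gaussD (d : ℕ) : Measure (Vec d) :=
  (Measure.pi fun _ : Fin d => gaussianReal 0 1).map (MeasurableEquiv.toLp 2 (Fin d → ℝ))

/-- Frobenius norm of a matrix. -/
def matFrobNorm {m n : ℕ} (A : Matrix (Fin m) (Fin n) ℝ) : ℝ :=
  Real.sqrt (∑ i, ∑ j, (A i j) ^ 2)

/-- Operator (spectral) norm of a matrix. -/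
def matOpNorm {m n : ℕ} (A : Matrix (Fin m) (Fin n) ℝ) : ℝ :=
  ‖LinearMap.toContinuousLinearMap (Matrix.toEuclideanLin A)‖

/-- Loewner order `A ⪯ B`. -/
def loeLE {d : ℕ} (A B : Mat d) : Prop := (B - A).PosSemidef

/-- Hessian matrix of `f` at `x`. -/
def hess {d : ℕ} (f : Vec d → ℝ) (x : Vec d) : Mat d :=
  Matrix.of fun i j =>
    iteratedFDeriv ℝ 2 f x ![EuclideanSpace.single i 1, EuclideanSpace.single j 1]

/-- Membership in `S = {Σ symmetric : ζ⁻¹ I ⪯ Σ ⪯ τ⁻¹ I}`. -/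
def Smem {d : ℕ} (τ ζ : ℝ) (A : Mat d) : Prop :=
  A.IsSymm ∧ loeLE (ζ⁻¹ • 1) A ∧ loeLE A (τ⁻¹ • 1)

/-- Membership in `S' = {A symmetric : τ I ⪯ A ⪯ ζ I}`. -/
def S'mem {d : ℕ} (τ ζ : ℝ) (A : Mat d) : Prop :=
  A.IsSymm ∧ loeLE (τ • 1) A ∧ loeLE A (ζ • 1)

/-- The square root of a positive semidefinite matrix (Mathlib's former `PosSemidef.sqrt`). -/
def Matrix.PosSemidef.sqrt {n : Type*} [Fintype n] [DecidableEq n]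
    {A : Matrix n n ℝ} (hA : A.PosSemidef) : Matrix n n ℝ :=
  hA.1.eigenvectorUnitary.1 * diagonal ((√·) ∘ hA.1.eigenvalues) *
    (star hA.1.eigenvectorUnitary : Matrix n n ℝ)

/-- The regularized reparameterized objective `Q_α(μ, Σ)`. -/
def Qa {d : ℕ} (f : Vec d → ℝ) (α : ℝ) (μ : Vec d) (S : Mat d) (hS : S.PosSemidef) : ℝ :=
  (∫ u, f (μ + α • mvec hS.sqrt u) ∂ gaussD d) - α ^ 2 / 2 * Real.log S.det

/-- `Ḡ(Σ)`, the zeroth-order estimator of `2α⁻² ∂J/∂Σ` built from query points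
`u₁, …, u_b` (here `Q = Σ^{1/2}`). -/
def Gbar {d b : ℕ} (f : Vec d → ℝ) (α : ℝ) (S Q : Mat d) (μ : Vec d)
    (u : Fin b → Vec d) : Mat d :=
  (1 / (2 * (b : ℝ) * α ^ 2)) • ∑ i : Fin b,
    (f (μ - α • mvec Q (u i)) + f (μ + α • mvec Q (u i)) - 2 * f μ) •
      (Matrix.of fun k l =>
        (Q⁻¹.mulVec (toPi (u i))) k * (Q⁻¹.mulVec (toPi (u i))) l - S⁻¹ k l)

section Taylor

open Set

lemma norm_le_of_hasDerivAt_of_norm_deriv_le_pow {E : Type*} [NormedAddCommGroup E]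
    [NormedSpace ℝ E] {ψ ψ' : ℝ → E} {C : ℝ} {n : ℕ} (hψ0 : ψ 0 = 0)
    (hψ : ∀ t, HasDerivAt ψ (ψ' t) t) (hbound : ∀ t ∈ Ico (0 : ℝ) 1, ‖ψ' t‖ ≤ C * t ^ n) :
    ∀ t ∈ Icc (0 : ℝ) 1, ‖ψ t‖ ≤ C / (n + 1) * t ^ (n + 1) := by
  have hB : ∀ t : ℝ, HasDerivAt (fun t => C / (n + 1) * t ^ (n + 1)) (C * t ^ n) t := fun t =>
    ((hasDerivAt_pow (n + 1) t).const_mul _).congr_deriv (by push_cast; field_simp)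
  exact image_norm_le_of_norm_deriv_right_le_deriv_boundary
    (fun t _ => (hψ t).continuousAt.continuousWithinAt) (fun t _ => (hψ t).hasDerivWithinAt)
    (by simp [hψ0]) hB hbound

lemma abs_central_second_difference_sub_le {φ φ' φ'' : ℝ → ℝ} {K : ℝ}
    (hφ : ∀ t, HasDerivAt φ (φ' t) t) (hφ' : ∀ t, HasDerivAt φ' (φ'' t) t)
    (hK : ∀ t, |φ'' t - φ'' 0| ≤ K * |t|) :
    |φ 1 + φ (-1) - 2 * φ 0 - φ'' 0| ≤ K / 3 := by
  -- `ψ t = φ t + φ (-t) - 2 φ 0 - t² φ'' 0` has `ψ' = χ` and `|χ' t| ≤ 2Kt` on `[0, 1]`;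
  -- integrating twice gives `|χ t| ≤ K t²` and then `|ψ 1| ≤ K / 3`.
  set χ : ℝ → ℝ := fun t => φ' t - φ' (-t) - 2 * t * φ'' 0
  have hχ : ∀ t, HasDerivAt χ ((φ'' t - φ'' 0) + (φ'' (-t) - φ'' 0)) t := fun t =>
    (((hφ' t).sub ((hφ' (-t)).comp t (hasDerivAt_neg t))).sub
      (((hasDerivAt_id t).const_mul 2).mul_const (φ'' 0))).congr_deriv (by simp; ring)
  have hχ' : ∀ s ∈ Ico (0 : ℝ) 1,
      ‖(φ'' s - φ'' 0) + (φ'' (-s) - φ'' 0)‖ ≤ 2 * K * s ^ 1 := fun s hs => by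
    have h₁ := hK s
    have h₂ := hK (-s)
    rw [abs_neg, abs_of_nonneg hs.1] at h₂
    rw [abs_of_nonneg hs.1] at h₁
    rw [Real.norm_eq_abs]
    linarith [abs_add_le (φ'' s - φ'' 0) (φ'' (-s) - φ'' 0)]
  have hχle : ∀ t ∈ Icc (0 : ℝ) 1, ‖χ t‖ ≤ K * t ^ 2 := fun t ht => by
    convert norm_le_of_hasDerivAt_of_norm_deriv_le_pow (by simp [χ]) hχ hχ' t ht using 1
    push_cast
    ring
  set ψ : ℝ → ℝ := fun t => φ t + φ (-t) - 2 * φ 0 - t ^ 2 * φ'' 0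
  have hψ : ∀ t, HasDerivAt ψ (χ t) t := fun t =>
    ((((hφ t).add ((hφ (-t)).comp t (hasDerivAt_neg t))).sub_const (2 * φ 0)).sub
      ((hasDerivAt_pow 2 t).mul_const (φ'' 0))).congr_deriv (by simp [χ]; ring)
  have := norm_le_of_hasDerivAt_of_norm_deriv_le_pow (n := 2) (by simp [ψ]; ring) hψ
    (fun t ht => hχle t (Ico_subset_Icc_self ht)) 1 (right_mem_Icc.2 zero_le_one)
  simp only [ψ, Real.norm_eq_abs] at this
  convert this using 2 <;> norm_num

lemma abs_add_add_sub_two_sub_fderiv_fderiv_le {E : Type*} [NormedAddCommGroup E]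
    [NormedSpace ℝ E] {f : E → ℝ} (hf : ContDiff ℝ 2 f) {x : E} {γ : ℝ}
    (hγ : ∀ y, ‖fderiv ℝ (fderiv ℝ f) y - fderiv ℝ (fderiv ℝ f) x‖ ≤ γ * ‖y - x‖) (h : E) :
    |f (x + h) + f (x - h) - 2 * f x - fderiv ℝ (fderiv ℝ f) x h h| ≤ γ / 3 * ‖h‖ ^ 3 := by
  have hf1 : Differentiable ℝ f := hf.differentiable two_ne_zero
  have hf2 : Differentiable ℝ (fderiv ℝ f) :=
    (hf.fderiv_right (m := 1) le_rfl).differentiable one_ne_zero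
  have hline : ∀ t : ℝ, HasDerivAt (fun s : ℝ => x + s • h) h t := fun t => by
    simpa using ((hasDerivAt_id t).smul_const h).const_add x
  have key := abs_central_second_difference_sub_le (φ := fun t => f (x + t • h))
    (φ' := fun t => fderiv ℝ f (x + t • h) h)
    (φ'' := fun t => fderiv ℝ (fderiv ℝ f) (x + t • h) h h) (K := γ * ‖h‖ ^ 3)
    (fun t => (hf1 _).hasFDerivAt.comp_hasDerivAt t (hline t))
    (fun t => by
      simpa using ((hf2 _).hasFDerivAt.comp_hasDerivAt t (hline t)).clm_apply
        (hasDerivAt_const t h))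
    (fun t => by
      rw [zero_smul, add_zero, ← _root_.sub_apply, ← _root_.sub_apply]
      calc _ ≤ ‖fderiv ℝ (fderiv ℝ f) (x + t • h) - fderiv ℝ (fderiv ℝ f) x‖ * ‖h‖ * ‖h‖ :=
            ContinuousLinearMap.le_opNorm₂ _ _ _
        _ ≤ γ * ‖t • h‖ * ‖h‖ * ‖h‖ := by
            gcongr; simpa using hγ (x + t • h)
        _ = γ * ‖h‖ ^ 3 * |t| := by rw [norm_smul, Real.norm_eq_abs]; ring)
  simp only [one_smul, neg_one_smul, zero_smul, add_zero, ← sub_eq_add_neg] at key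
  linarith [key]

end Taylor

open scoped Matrix.Norms.L2Operator

section Operator

variable {d : ℕ}

lemma matOpNorm_eq_norm (A : Mat d) : matOpNorm A = ‖A‖ := rfl

lemma mvec_eq_toEuclideanCLM (A : Mat d) (x : Vec d) :
    mvec A x = Matrix.toEuclideanCLM (𝕜 := ℝ) A x := rfl

lemma norm_mvec_le (A : Mat d) (x : Vec d) : ‖mvec A x‖ ≤ ‖A‖ * ‖x‖ :=
  (Matrix.toEuclideanCLM (𝕜 := ℝ) A).le_opNorm x

lemma norm_le_of_forall_norm_mvec_le {A : Mat d} {C : ℝ} (hC : 0 ≤ C)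
    (h : ∀ x, ‖mvec A x‖ ≤ C * ‖x‖) : ‖A‖ ≤ C :=
  ContinuousLinearMap.opNorm_le_bound _ hC h

lemma mvec_mul (A B : Mat d) (x : Vec d) : mvec (A * B) x = mvec A (mvec B x) := by
  simp [mvec_eq_toEuclideanCLM]

lemma mvec_sub (A B : Mat d) (x : Vec d) : mvec (A - B) x = mvec A x - mvec B x := by
  simp [mvec_eq_toEuclideanCLM]

lemma mvec_vecMulVec (w x : Vec d) : mvec (vecMulVec (toPi w) (toPi w)) x = ⟪w, x⟫ • w := by
  ext i
  simp [mvec, ofPi, toPi, vecMulVec_mulVec, PiLp.inner_apply, dotProduct, mul_comm]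

lemma inner_mvec_of_isSymm {A : Mat d} (hA : A.IsSymm) (x y : Vec d) :
    ⟪mvec A x, y⟫ = ⟪x, mvec A y⟫ := by
  rw [real_inner_comm, mvec_eq_toEuclideanCLM, mvec_eq_toEuclideanCLM,
    inner_toEuclideanCLM, inner_toEuclideanCLM, dotProduct_mulVec, ← mulVec_transpose, hA.eq,
    dotProduct_comm]

lemma norm_vecMulVec_self_le (w : Vec d) : ‖vecMulVec (toPi w) (toPi w)‖ ≤ ‖w‖ ^ 2 :=
  norm_le_of_forall_norm_mvec_le (by positivity) fun x => by
    rw [mvec_vecMulVec, norm_smul, Real.norm_eq_abs]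
    calc |⟪w, x⟫| * ‖w‖ ≤ ‖w‖ * ‖x‖ * ‖w‖ := by gcongr; exact abs_real_inner_le_norm w x
      _ = ‖w‖ ^ 2 * ‖x‖ := by ring

lemma norm_vecMulVec_sub_mul_self_le (P : Mat d) (u : Vec d) :
    ‖vecMulVec (toPi (mvec P u)) (toPi (mvec P u)) - P * P‖ ≤ ‖P‖ ^ 2 * (‖u‖ ^ 2 + 1) :=
  calc _ ≤ ‖mvec P u‖ ^ 2 + ‖P‖ * ‖P‖ :=
        (norm_sub_le _ _).trans (add_le_add (norm_vecMulVec_self_le _) (norm_mul_le _ _))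
    _ ≤ (‖P‖ * ‖u‖) ^ 2 + ‖P‖ * ‖P‖ := by gcongr; exact norm_mvec_le P u
    _ = ‖P‖ ^ 2 * (‖u‖ ^ 2 + 1) := by ring

end Operator

section Loewner

variable {d : ℕ}

lemma inner_mvec_le_of_loeLE {A B : Mat d} (h : loeLE A B) (x : Vec d) :
    ⟪x, mvec A x⟫ ≤ ⟪x, mvec B x⟫ := by
  have := h.dotProduct_mulVec_nonneg (toPi x)
  rw [star_trivial, sub_mulVec, dotProduct_sub, sub_nonneg] at this
  rwa [mvec_eq_toEuclideanCLM, mvec_eq_toEuclideanCLM, inner_toEuclideanCLM, inner_toEuclideanCLM]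

lemma inner_mvec_smul_one (r : ℝ) (x : Vec d) : ⟪x, mvec (r • 1) x⟫ = r * ‖x‖ ^ 2 := by
  simp [mvec_eq_toEuclideanCLM, inner_smul_right]

lemma norm_mvec_sq_eq_inner_mul_self {P : Mat d} (hP : P.IsSymm) (x : Vec d) :
    ‖mvec P x‖ ^ 2 = ⟪x, mvec (P * P) x⟫ := by
  rw [← real_inner_self_eq_norm_sq, inner_mvec_of_isSymm hP, mvec_mul]

lemma sq_norm_le_of_loeLE_mul_self {P : Mat d} {ζ : ℝ} (hP : P.IsSymm) (hζ : 0 ≤ ζ)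
    (h : loeLE (P * P) (ζ • 1)) : ‖P‖ ^ 2 ≤ ζ := by
  have hnorm : ‖P‖ ≤ √ζ := norm_le_of_forall_norm_mvec_le (Real.sqrt_nonneg ζ) fun x => by
    rw [← sq_le_sq₀ (norm_nonneg _) (by positivity), mul_pow, Real.sq_sqrt hζ,
      norm_mvec_sq_eq_inner_mul_self hP, ← inner_mvec_smul_one]
    exact inner_mvec_le_of_loeLE h x
  calc ‖P‖ ^ 2 ≤ √ζ ^ 2 := by gcongr
    _ = ζ := Real.sq_sqrt hζ

lemma mul_sq_norm_mvec_le_of_loeLE {P Q : Mat d} {τ : ℝ} (hP : P.IsSymm) (hPQ : P * Q = 1)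
    (h : loeLE (τ • 1) (P * P)) (x : Vec d) : τ * ‖mvec Q x‖ ^ 2 ≤ ‖x‖ ^ 2 := by
  calc τ * ‖mvec Q x‖ ^ 2 = ⟪mvec Q x, mvec (τ • 1) (mvec Q x)⟫ := (inner_mvec_smul_one _ _).symm
    _ ≤ ⟪mvec Q x, mvec (P * P) (mvec Q x)⟫ := inner_mvec_le_of_loeLE h _
    _ = ‖x‖ ^ 2 := by
      rw [← norm_mvec_sq_eq_inner_mul_self hP, ← mvec_mul, hPQ]
      simp [mvec_eq_toEuclideanCLM]

end Loewner

section Hessian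

variable {d : ℕ}

lemma bilin_apply_eq_inner_mvec (B : Vec d →L[ℝ] Vec d →L[ℝ] ℝ) (v w : Vec d) :
    B v w = ⟪v, mvec (Matrix.of fun i j =>
      B (EuclideanSpace.single i 1) (EuclideanSpace.single j 1)) w⟫ := by
  rw [mvec_eq_toEuclideanCLM, inner_toEuclideanCLM]
  conv_lhs => rw [← (EuclideanSpace.basisFun (Fin d) ℝ).sum_repr v,
    ← (EuclideanSpace.basisFun (Fin d) ℝ).sum_repr w]
  simp [dotProduct, mulVec, Finset.mul_sum]
  rw [Finset.sum_comm]
  exact Finset.sum_congr rfl fun i _ => Finset.sum_congr rfl fun j _ => by ring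

lemma fderiv_fderiv_apply_eq_inner_hess (f : Vec d → ℝ) (x v w : Vec d) :
    fderiv ℝ (fderiv ℝ f) x v w = ⟪v, mvec (hess f x) w⟫ := by
  rw [bilin_apply_eq_inner_mvec]
  simp [hess, iteratedFDeriv_two_apply]

lemma norm_fderiv_fderiv_sub_le (f : Vec d → ℝ) (x y : Vec d) :
    ‖fderiv ℝ (fderiv ℝ f) x - fderiv ℝ (fderiv ℝ f) y‖ ≤ ‖hess f x - hess f y‖ :=
  ContinuousLinearMap.opNorm_le_bound₂ _ (norm_nonneg _) fun v w => by
    rw [_root_.sub_apply, _root_.sub_apply, fderiv_fderiv_apply_eq_inner_hess,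
      fderiv_fderiv_apply_eq_inner_hess, ← inner_sub_right, ← mvec_sub, Real.norm_eq_abs]
    calc _ ≤ ‖v‖ * ‖mvec (hess f x - hess f y) w‖ := abs_real_inner_le_norm _ _
      _ ≤ ‖v‖ * (‖hess f x - hess f y‖ * ‖w‖) := by gcongr; exact norm_mvec_le _ _
      _ = _ := by ring

lemma abs_add_add_sub_two_sub_inner_hess_le {f : Vec d → ℝ} (hf : ContDiff ℝ 2 f) {γ : ℝ}
    (hγ : ∀ x y, matOpNorm (hess f x - hess f y) ≤ γ * ‖x - y‖) (μ v : Vec d) (α : ℝ) :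
    |f (μ - α • v) + f (μ + α • v) - 2 * f μ - α ^ 2 * ⟪v, mvec (hess f μ) v⟫|
      ≤ γ / 3 * (|α| * ‖v‖) ^ 3 := by
  have := abs_add_add_sub_two_sub_fderiv_fderiv_le hf
    (fun y => (norm_fderiv_fderiv_sub_le f y μ).trans (hγ y μ)) (α • v)
  rw [fderiv_fderiv_apply_eq_inner_hess, inner_smul_left, mvec_eq_toEuclideanCLM, map_smul,
    inner_smul_right, norm_smul, Real.norm_eq_abs] at this
  convert this using 2
  simp only [conj_trivial, ← mvec_eq_toEuclideanCLM]
  ring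

end Hessian

section Sqrt

variable {d : ℕ}

lemma Matrix.PosSemidef.posSemidef_sqrt {A : Mat d} (hA : A.PosSemidef) :
    hA.sqrt.PosSemidef := by
  unfold Matrix.PosSemidef.sqrt
  rw [star_eq_conjTranspose]
  exact (posSemidef_diagonal_iff.2 fun i => Real.sqrt_nonneg _).mul_mul_conjTranspose_same _

lemma Matrix.PosSemidef.isSymm_sqrt {A : Mat d} (hA : A.PosSemidef) : hA.sqrt.IsSymm := by
  simpa [IsHermitian, IsSymm] using hA.posSemidef_sqrt.isHermitian

lemma Matrix.PosSemidef.sqrt_mul_self {A : Mat d} (hA : A.PosSemidef) :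
    hA.sqrt * hA.sqrt = A := by
  unfold Matrix.PosSemidef.sqrt
  set U : Mat d := (hA.1.eigenvectorUnitary : Mat d)
  set D : Mat d := diagonal ((√·) ∘ hA.1.eigenvalues)
  have hUU : star U * U = 1 := Unitary.coe_star_mul_self _
  have hDD : D * D = diagonal (RCLike.ofReal ∘ hA.1.eigenvalues) := by
    rw [diagonal_mul_diagonal]
    congr 1
    funext i
    simp [Real.mul_self_sqrt (hA.eigenvalues_nonneg i)]
  calc U * D * star U * (U * D * star U) = U * (D * (star U * U) * D) * star U := by
        simp only [Matrix.mul_assoc]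
    _ = A := by
      rw [hUU, Matrix.mul_one, hDD]
      exact hA.1.spectral_theorem.symm

lemma Matrix.PosDef.inv_sqrt_mul_sqrt {A : Mat d} (hA : A.PosDef) :
    hA.posSemidef.sqrt⁻¹ * hA.posSemidef.sqrt = 1 := by
  refine nonsing_inv_mul _ (isUnit_iff_ne_zero.2 fun h => hA.det_pos.ne' ?_)
  rw [← hA.posSemidef.sqrt_mul_self, det_mul, h, zero_mul]

end Sqrt

lemma norm_smul_sum_smul_le {E : Type*} [SeminormedAddCommGroup E] [NormedSpace ℝ E] {b : ℕ}
    (a : ℝ) (ε : Fin b → ℝ) (x : Fin b → E) {A B : ℝ} (hε : ∀ i, |ε i| ≤ A)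
    (hx : ∀ i, ‖x i‖ ≤ B) : ‖a • ∑ i, ε i • x i‖ ≤ |a| * (b * (A * B)) := by
  rw [norm_smul, Real.norm_eq_abs]
  gcongr
  calc ‖∑ i, ε i • x i‖ ≤ ∑ i, ‖ε i • x i‖ := norm_sum_le _ _
    _ ≤ ∑ _i : Fin b, A * B := Finset.sum_le_sum fun i _ => by
      rw [norm_smul, Real.norm_eq_abs]
      exact mul_le_mul (hε i) (hx i) (norm_nonneg _) ((abs_nonneg _).trans (hε i))
    _ = b * (A * B) := by simp

lemma Gbar_sub_smul_sum_eq {d b : ℕ} (f : Vec d → ℝ) {α : ℝ} (hα : α ≠ 0) (S Q : Mat d)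
    (μ : Vec d) (u : Fin b → Vec d) (q : Fin b → ℝ) :
    Gbar f α S Q μ u - (1 / (2 * (b : ℝ))) • ∑ i, q i •
        (Matrix.of fun k l => (Q⁻¹ *ᵥ toPi (u i)) k * (Q⁻¹ *ᵥ toPi (u i)) l - S⁻¹ k l) =
      (1 / (2 * (b : ℝ) * α ^ 2)) • ∑ i,
        (f (μ - α • mvec Q (u i)) + f (μ + α • mvec Q (u i)) - 2 * f μ - α ^ 2 * q i) •
          (Matrix.of fun k l => (Q⁻¹ *ᵥ toPi (u i)) k * (Q⁻¹ *ᵥ toPi (u i)) l - S⁻¹ k l) := by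
  rw [Gbar, Finset.smul_sum, Finset.smul_sum, Finset.smul_sum, ← Finset.sum_sub_distrib]
  refine Finset.sum_congr rfl fun i _ => ?_
  rw [smul_smul, smul_smul, smul_smul, ← sub_smul]
  congr 1
  field_simp

lemma pow_three_le_rpow_of_sq_le {r B : ℝ} (hr : 0 ≤ r) (h : r ^ 2 ≤ B) :
    r ^ 3 ≤ B ^ (3 / 2 : ℝ) :=
  calc r ^ 3 = (r ^ 2) ^ (3 / 2 : ℝ) := by
        rw [← Real.rpow_natCast, ← Real.rpow_natCast, ← Real.rpow_mul hr]; norm_num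
    _ ≤ B ^ (3 / 2 : ℝ) := by gcongr

theorem stmt13_general {d b : ℕ} (hb : 1 ≤ b)
    (f : Vec d → ℝ) (γ : ℝ) (hγ0 : 0 ≤ γ) (hf : ContDiff ℝ 2 f)
    (hγ : ∀ x y : Vec d, matOpNorm (hess f x - hess f y) ≤ γ * ‖x - y‖)
    (μ : Vec d) (α : ℝ) (hα : 0 < α) (τ ζ : ℝ) (hτ : 0 < τ) (hτζ : τ ≤ ζ)
    (S : Mat d) (hS : S.PosDef)
    (hτS : loeLE (τ • 1) S⁻¹) (hSζ : loeLE S⁻¹ (ζ • 1))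
    (u : Fin b → Vec d) (c : ℝ) (hc : 0 < c) (hu : ∀ i, ‖u i‖ ^ 2 ≤ c) :
    matOpNorm (Gbar f α S hS.posSemidef.sqrt μ u
        - (1 / (2 * (b : ℝ))) • ∑ i : Fin b,
            ⟪u i, mvec (hS.posSemidef.sqrt * hess f μ * hS.posSemidef.sqrt) (u i)⟫ •
              (Matrix.of fun k l =>
                ((hS.posSemidef.sqrt)⁻¹.mulVec (toPi (u i))) k *
                  ((hS.posSemidef.sqrt)⁻¹.mulVec (toPi (u i))) l - S⁻¹ k l))
      ≤ c ^ (3 / 2 : ℝ) * (c + 1) * ζ * γ * α / (4 * τ ^ (3 / 2 : ℝ)) := by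
  set Q := hS.posSemidef.sqrt
  have hζ : 0 ≤ ζ := hτ.le.trans hτζ
  have hQ : Q.IsSymm := hS.posSemidef.isSymm_sqrt
  have hPP : Q⁻¹ * Q⁻¹ = S⁻¹ := by rw [← Matrix.mul_inv_rev, hS.posSemidef.sqrt_mul_self]
  have hM : ∀ i, ‖Matrix.of fun k l => (Q⁻¹ *ᵥ toPi (u i)) k * (Q⁻¹ *ᵥ toPi (u i)) l - S⁻¹ k l‖
      ≤ ζ * (c + 1) := fun i => by
    rw [← hPP]
    refine (norm_vecMulVec_sub_mul_self_le Q⁻¹ (u i)).trans ?_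
    gcongr
    · exact sq_norm_le_of_loeLE_mul_self hQ.inv hζ (hPP ▸ hSζ)
    · exact hu i
  have hε : ∀ i, |f (μ - α • mvec Q (u i)) + f (μ + α • mvec Q (u i)) - 2 * f μ
      - α ^ 2 * ⟪u i, mvec (Q * hess f μ * Q) (u i)⟫| ≤ γ / 3 * (α ^ 3 * (c / τ) ^ (3 / 2 : ℝ)) := by
    intro i
    have hQu : ‖mvec Q (u i)‖ ^ 2 ≤ c / τ := by
      rw [le_div_iff₀' hτ]
      exact (mul_sq_norm_mvec_le_of_loeLE hQ.inv hS.inv_sqrt_mul_sqrt (hPP ▸ hτS) _).trans (hu i)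
    rw [mvec_mul, mvec_mul, ← inner_mvec_of_isSymm hQ]
    refine (abs_add_add_sub_two_sub_inner_hess_le hf hγ μ _ α).trans ?_
    rw [abs_of_pos hα, mul_pow]
    gcongr
    exact pow_three_le_rpow_of_sq_le (norm_nonneg _) hQu
  rw [matOpNorm_eq_norm, Gbar_sub_smul_sum_eq f hα.ne' S Q μ u]
  refine (norm_smul_sum_smul_le _ _ _ hε hM).trans ?_
  have hb' : (0 : ℝ) < b := by exact_mod_cast hb
  have hτ' : 0 < τ ^ (3 / 2 : ℝ) := by positivity
  rw [abs_of_pos (by positivity), Real.div_rpow hc.le hτ.le]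
  field_simp
  nlinarith [mul_nonneg hγ0 hζ]

/-- operator-norm bound comparing `Ḡ(Σ)` with its quadratic-model
counterpart, given `‖uᵢ‖² ≤ c` for all `i`. -/
theorem stmt13 {d b : ℕ} (hd : 1 ≤ d) (hb : 1 ≤ b)
    (f : Vec d → ℝ) (γ : ℝ) (hγ0 : 0 ≤ γ) (hf : ContDiff ℝ 2 f)
    (hγ : ∀ x y : Vec d, matOpNorm (hess f x - hess f y) ≤ γ * ‖x - y‖)
    (μ : Vec d) (α : ℝ) (hα : 0 < α) (τ ζ : ℝ) (hτ : 0 < τ) (hτζ : τ ≤ ζ)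
    (S : Mat d) (hSsymm : S.IsSymm) (hS : S.PosDef)
    (hτS : loeLE (τ • 1) S⁻¹) (hSζ : loeLE S⁻¹ (ζ • 1))
    (u : Fin b → Vec d) (c : ℝ) (hc : 0 < c) (hu : ∀ i, ‖u i‖ ^ 2 ≤ c) :
    matOpNorm (Gbar f α S hS.posSemidef.sqrt μ u
        - (1 / (2 * (b : ℝ))) • ∑ i : Fin b,
            ⟪u i, mvec (hS.posSemidef.sqrt * hess f μ * hS.posSemidef.sqrt) (u i)⟫ •
              (Matrix.of fun k l =>
                ((hS.posSemidef.sqrt)⁻¹.mulVec (toPi (u i))) k *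
                  ((hS.posSemidef.sqrt)⁻¹.mulVec (toPi (u i))) l - S⁻¹ k l))
      ≤ c ^ (3 / 2 : ℝ) * (c + 1) * ζ * γ * α / (4 * τ ^ (3 / 2 : ℝ)) :=
  stmt13_general hb f γ hγ0 hf hγ μ α hα τ ζ hτ hτζ S hS hτS hSζ u c hc hu
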